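/- Let P → Q be an injective homomorphism of finitely generated abelian groups. Then there is an isomorphism of rings ℤ[Q] ⊗_{ℤ[P]} ℤ[Q] ≅ ℤ[Q] ⊗_ℤ ℤ[Q/P], where ℤ[−] denotes the group algebra and Q/P is the cokernel of P → Q. In particular, if Q/P is finite, then ℤ[Q] ⊗_{ℤ[P]} ℤ[Q] is a finite free module over ℤ[Q]. -/

import Mathlib

/-!
In `R[Q] ⊗[R[P]] R[Q]` the elements `f p` may be moved across the tensor sign, so
`(-y) ⊗ y` only depends on the class of `y` in `Q ⧸ f.range`; since
`((-y) ⊗ y) * ((-z) ⊗ z) = (-(y + z)) ⊗ (y + z)`, this gives an algebra map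
`R[Q ⧸ f.range] → R[Q] ⊗[R[P]] R[Q]`. Together with the left inclusion it yields
`x ⊗ ȳ ↦ (x - y) ⊗ y`, which is inverse to `x ⊗ y ↦ (x + y) ⊗ ȳ`. Both maps are
`R[Q]`-linear for the left factor, so `R[Q] ⊗[R[P]] R[Q]` is the base change of
`R[Q ⧸ f.range]` to `R[Q]`: free, and finite when `Q ⧸ f.range` is.
-/

open scoped AddMonoidAlgebra TensorProduct
open Algebra.TensorProduct

namespace AddMonoidAlgebra

variable {R P Q : Type*} [CommSemiring R] [AddCommGroup P] [AddCommGroup Q]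

variable (R) in
noncomputable def tmulMk (N : AddSubgroup Q) : R[Q] →ₐ[R] R[Q] ⊗[R] R[Q ⧸ N] :=
  lift R _ Q
    { toFun y := single y.toAdd 1 ⊗ₜ single (QuotientAddGroup.mk y.toAdd) 1
      map_one' := rfl
      map_mul' y z := by simp [tmul_mul_tmul, single_mul_single] }

@[simp]
lemma tmulMk_single (N : AddSubgroup Q) (y : Q) :
    tmulMk R N (single y 1) = single y 1 ⊗ₜ single (y : Q ⧸ N) 1 :=
  (lift_single _ _ _).trans (one_smul _ _)

noncomputable def negTmulSelf {A : Type*} [CommSemiring A] [Algebra A R[Q]] :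
    Q →+ Additive (R[Q] ⊗[A] R[Q]) where
  toFun y := .ofMul (single (-y) 1 ⊗ₜ single y 1)
  map_zero' := by rw [neg_zero, ← one_def]; rfl
  map_add' y z := by
    rw [← ofMul_mul, tmul_mul_tmul, single_mul_single, single_mul_single, neg_add, one_mul]

lemma negTmulSelf_apply {A : Type*} [CommSemiring A] [Algebra A R[Q]] (y : Q) :
    (negTmulSelf y).toMul = (single (-y) 1 ⊗ₜ single y 1 : R[Q] ⊗[A] R[Q]) :=
  rfl

variable [Algebra R[P] R[Q]] {f : P →+ Q}

lemma range_le_ker_negTmulSelf (hf : ∀ p, algebraMap R[P] R[Q] (single p 1) = single (f p) 1) :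
    f.range ≤ (negTmulSelf (R := R) (A := R[P])).ker := by
  rintro _ ⟨p, rfl⟩
  rw [AddMonoidHom.mem_ker, ← toMul_eq_one, negTmulSelf_apply]
  calc (single (-f p) 1 : R[Q]) ⊗ₜ[R[P]] (single (f p) 1 : R[Q])
      = (single (-f p) 1 : R[Q]) ⊗ₜ[R[P]] ((single p 1 : R[P]) • (1 : R[Q])) := by
        rw [Algebra.smul_def, hf, mul_one]
    _ = (single (-f p + f p) 1 : R[Q]) ⊗ₜ 1 := by
        rw [← TensorProduct.smul_tmul, Algebra.smul_def, hf, mul_comm, single_mul_single, one_mul]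
    _ = 1 := by rw [neg_add_cancel, ← one_def]; rfl

variable [IsScalarTower R R[P] R[Q]] (hf : ∀ p, algebraMap R[P] R[Q] (single p 1) = single (f p) 1)

noncomputable def tmulMkAlgHom : R[Q] →ₐ[R[P]] R[Q] ⊗[R] R[Q ⧸ f.range] :=
  { tmulMk R f.range with
    commutes' r := by
      have : (tmulMk R f.range).comp (IsScalarTower.toAlgHom R R[P] R[Q]) =
          includeLeft.comp (IsScalarTower.toAlgHom R R[P] R[Q]) := by
        ext p
        have hmk : ((f p : Q) : Q ⧸ f.range) = 0 := (QuotientAddGroup.eq_zero_iff _).2 ⟨p, rfl⟩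
        simp [hf, hmk, ← one_def]
      exact AlgHom.congr_fun this r }

@[simp]
lemma tmulMkAlgHom_apply (x : R[Q]) : tmulMkAlgHom hf x = tmulMk R f.range x :=
  rfl

noncomputable def negTmulSelfLift : R[Q ⧸ f.range] →ₐ[R] R[Q] ⊗[R[P]] R[Q] :=
  lift R _ _ <| AddMonoidHom.toMultiplicativeLeft <|
    QuotientAddGroup.lift _ negTmulSelf (range_le_ker_negTmulSelf hf)

@[simp]
lemma negTmulSelfLift_single (y : Q) :
    negTmulSelfLift hf (single (y : Q ⧸ f.range) 1) = single (-y) 1 ⊗ₜ single y 1 :=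
  (lift_single _ _ _).trans (one_smul _ _)

noncomputable def tensorEquivTensorQuotient :
    R[Q] ⊗[R[P]] R[Q] ≃ₐ[R[Q]] R[Q] ⊗[R] R[Q ⧸ f.range] :=
  .ofAlgHom (productLeftAlgHom includeLeft (tmulMkAlgHom hf))
    (productLeftAlgHom includeLeft (negTmulSelfLift hf))
    (by
      ext y
      induction y using QuotientAddGroup.induction_on
      simp [tmul_mul_tmul, single_mul_single, ← one_def])
    (by
      refine Algebra.TensorProduct.ext (by ext) ?_
      apply AlgHom.restrictScalars_injective R
      ext y
      simp [tmul_mul_tmul, single_mul_single, ← one_def])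

@[simp]
lemma tensorEquivTensorQuotient_single_tmul_single (x y : Q) :
    tensorEquivTensorQuotient hf (single x 1 ⊗ₜ single y 1) =
      single (x + y) 1 ⊗ₜ single (y : Q ⧸ f.range) 1 := by
  simp [tensorEquivTensorQuotient, tmul_mul_tmul, single_mul_single]

end AddMonoidAlgebra

open AddMonoidAlgebra in
theorem stmt5_general {P Q : Type*} [AddCommGroup P] [AddCommGroup Q]
    (f : P →+ Q) :
    letI : Algebra (AddMonoidAlgebra ℤ P) (AddMonoidAlgebra ℤ Q) :=
      (AddMonoidAlgebra.mapDomainRingHom ℤ f).toAlgebra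
    ∃ e : (TensorProduct (AddMonoidAlgebra ℤ P)
            (AddMonoidAlgebra ℤ Q) (AddMonoidAlgebra ℤ Q)) ≃+*
          (TensorProduct ℤ (AddMonoidAlgebra ℤ Q)
            (AddMonoidAlgebra ℤ (Q ⧸ f.range))),
      (∀ x y : Q,
        e (AddMonoidAlgebra.single x 1 ⊗ₜ AddMonoidAlgebra.single y 1) =
          AddMonoidAlgebra.single (x + y) 1 ⊗ₜ
            AddMonoidAlgebra.single (QuotientAddGroup.mk' f.range y) 1) ∧
      (Finite (Q ⧸ f.range) →
        Module.Finite (AddMonoidAlgebra ℤ Q)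
          (TensorProduct (AddMonoidAlgebra ℤ P)
            (AddMonoidAlgebra ℤ Q) (AddMonoidAlgebra ℤ Q)) ∧
        Module.Free (AddMonoidAlgebra ℤ Q)
          (TensorProduct (AddMonoidAlgebra ℤ P)
            (AddMonoidAlgebra ℤ Q) (AddMonoidAlgebra ℤ Q))) := by
  let : Algebra ℤ[P] ℤ[Q] := (mapDomainRingHom ℤ f).toAlgebra
  have hf (p : P) : algebraMap ℤ[P] ℤ[Q] (single p 1) = single (f p) 1 := mapDomain_single ..
  let e := tensorEquivTensorQuotient hf
  refine ⟨e.toRingEquiv, tensorEquivTensorQuotient_single_tmul_single hf, fun _ ↦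
    ⟨.equiv e.symm.toLinearEquiv, .of_equiv e.symm.toLinearEquiv⟩⟩

/-- Let `P → Q` be an injective homomorphism of finitely generated
abelian groups.  Then `ℤ[Q] ⊗_{ℤ[P]} ℤ[Q] ≅ ℤ[Q] ⊗_ℤ ℤ[Q/P]` as rings, the
isomorphism being induced by `(x, y) ↦ (x·y, ȳ)` on group elements.  In
particular, if `Q/P` is finite then `ℤ[Q] ⊗_{ℤ[P]} ℤ[Q]` is a finite free
module over `ℤ[Q]` (via the left factor). -/
theorem stmt5 {P Q : Type*} [AddCommGroup P] [AddCommGroup Q]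
    [AddGroup.FG P] [AddGroup.FG Q]
    (f : P →+ Q) (hf : Function.Injective f) :
    letI : Algebra (AddMonoidAlgebra ℤ P) (AddMonoidAlgebra ℤ Q) :=
      (AddMonoidAlgebra.mapDomainRingHom ℤ f).toAlgebra
    ∃ e : (TensorProduct (AddMonoidAlgebra ℤ P)
            (AddMonoidAlgebra ℤ Q) (AddMonoidAlgebra ℤ Q)) ≃+*
          (TensorProduct ℤ (AddMonoidAlgebra ℤ Q)
            (AddMonoidAlgebra ℤ (Q ⧸ f.range))),
      (∀ x y : Q,
        e (AddMonoidAlgebra.single x 1 ⊗ₜ AddMonoidAlgebra.single y 1) =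
          AddMonoidAlgebra.single (x + y) 1 ⊗ₜ
            AddMonoidAlgebra.single (QuotientAddGroup.mk' f.range y) 1) ∧
      (Finite (Q ⧸ f.range) →
        Module.Finite (AddMonoidAlgebra ℤ Q)
          (TensorProduct (AddMonoidAlgebra ℤ P)
            (AddMonoidAlgebra ℤ Q) (AddMonoidAlgebra ℤ Q)) ∧
        Module.Free (AddMonoidAlgebra ℤ Q)
          (TensorProduct (AddMonoidAlgebra ℤ P)
            (AddMonoidAlgebra ℤ Q) (AddMonoidAlgebra ℤ Q))) :=
  stmt5_general f
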